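/- Let a, b ∈ K with a ≠ b. If x ∈ K satisfies (a² + b²)·x + ∑_{j=1}^{l−1} [ γ_j a·( T_j(γ_j a x) + γ_j a x ) + γ_j b·( T_j(γ_j b x) + γ_j b x ) ] = 0, then x = 0. -/

import Mathlib

open Finset

/-- `T_j(w) = ∑_{i=0}^{f_j−1} w^{2^{i e_j}}` (the relative trace onto `𝔽_{2^{e_j}}`),
where `f_j = m / e_j`. -/
def Tform {K : Type*} [CommRing K] (m ej : ℕ) (w : K) : K :=
  ∑ i ∈ Finset.range (m / ej), w ^ (2 ^ (i * ej))

section helpers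
variable {K : Type*} [Field K] [CharP K 2]

omit [CharP K 2] in
lemma fix_of_dvd {w : K} {d n : ℕ} (hd : d ∣ n) (h : w ^ 2 ^ d = w) : w ^ 2 ^ n = w := by
  obtain ⟨k, rfl⟩ := hd
  induction k with
  | zero => simp
  | succ k ih =>
    have h2 : 2 ^ (d * (k+1)) = 2 ^ (d*k) * 2 ^ d := by rw [← pow_add]; ring_nf
    rw [h2, pow_mul, ih, h]

lemma fix_add {u v : K} {n : ℕ} (hu : u ^ 2 ^ n = u) (hv : v ^ 2 ^ n = v) :
    (u + v) ^ 2 ^ n = u + v := by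
  rw [add_pow_char_pow, hu, hv]

omit [CharP K 2] in
lemma fix_mul {u v : K} {n : ℕ} (hu : u ^ 2 ^ n = u) (hv : v ^ 2 ^ n = v) :
    (u * v) ^ 2 ^ n = u * v := by rw [mul_pow, hu, hv]

omit [CharP K 2] in
lemma fix_one {n : ℕ} : (1 : K) ^ 2 ^ n = 1 := one_pow _

omit [CharP K 2] in
lemma fix_inv {u : K} {n : ℕ} (hu : u ^ 2 ^ n = u) : (u⁻¹) ^ 2 ^ n = u⁻¹ := by
  rw [inv_pow, hu]

omit [CharP K 2] in
lemma fix_sq {u : K} {n : ℕ} (hu : u ^ 2 ^ n = u) : (u ^ 2) ^ 2 ^ n = u ^ 2 := by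
  rw [← pow_mul, mul_comm, pow_mul, hu]

lemma fix_sum {ι : Type*} (s : Finset ι) (f : ι → K) {n : ℕ}
    (h : ∀ i ∈ s, f i ^ 2 ^ n = f i) : (∑ i ∈ s, f i) ^ 2 ^ n = ∑ i ∈ s, f i := by
  rw [sum_pow_char_pow]
  exact Finset.sum_congr rfl h

omit [CharP K 2] in
lemma shift_sum {f : ℕ} {g : ℕ → K} (h : g f = g 0) :
    ∑ i ∈ range f, g (i+1) = ∑ i ∈ range f, g i := by
  have h1 := Finset.sum_range_succ' g f
  have h2 := Finset.sum_range_succ g f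
  rw [h2, h] at h1
  exact (add_right_cancel h1.symm)

omit [CharP K 2] in
lemma Tform_zero (n d : ℕ) : Tform n d (0 : K) = 0 := by
  unfold Tform
  apply Finset.sum_eq_zero
  intro i _
  exact zero_pow (pow_ne_zero _ two_ne_zero)

lemma Tform_add (n d : ℕ) (u v : K) :
    Tform n d (u + v) = Tform n d u + Tform n d v := by
  unfold Tform
  rw [← Finset.sum_add_distrib]
  exact Finset.sum_congr rfl fun i _ => add_pow_char_pow u v 2 _

omit [CharP K 2] in
lemma Tform_smul (n d : ℕ) {γ : K} (hγ : γ ^ 2 ^ d = γ) (w : K) :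
    Tform n d (γ * w) = γ * Tform n d w := by
  unfold Tform
  rw [Finset.mul_sum]
  refine Finset.sum_congr rfl fun i _ => ?_
  rw [mul_pow, fix_of_dvd (Dvd.intro_left i rfl) hγ]

lemma Tform_sq (n d : ℕ) (w : K) : Tform n d (w ^ 2) = (Tform n d w) ^ 2 := by
  unfold Tform
  rw [sum_pow_char]
  exact Finset.sum_congr rfl fun i _ => by rw [← pow_mul, ← pow_mul, mul_comm]

lemma Tform_mem (n d : ℕ) (hd : d ∣ n) {w : K} (hw : w ^ 2 ^ n = w) :
    (Tform n d w) ^ 2 ^ d = Tform n d w := by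
  unfold Tform
  rw [sum_pow_char_pow]
  have key : ∀ i, (w ^ 2 ^ (i * d)) ^ 2 ^ d = w ^ 2 ^ ((i+1) * d) := fun i => by
    rw [← pow_mul, ← pow_add, add_mul, one_mul]
  rw [Finset.sum_congr rfl fun i _ => key i]
  exact shift_sum (g := fun i => w ^ 2 ^ (i * d))
    (by show w ^ 2 ^ (n/d*d) = w ^ 2 ^ (0*d)
        rw [Nat.div_mul_cancel hd, hw, Nat.zero_mul, pow_zero, pow_one])

omit [CharP K 2] in
lemma sum_range_mul_eq {M : Type*} [AddCommMonoid M] (g : ℕ → M) (r q : ℕ) :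
    ∑ j ∈ range (r*q), g j = ∑ i ∈ range r, ∑ i' ∈ range q, g (i*q + i') := by
  induction r with
  | zero => simp
  | succ r ih =>
    rw [add_mul, one_mul, Finset.sum_range_add, ih, Finset.sum_range_succ]

lemma Tform_trans (n n' d : ℕ) (h1 : d ∣ n') (h2 : n' ∣ n) (hn' : 0 < n') (w : K) :
    Tform n d w = Tform n' d (Tform n n' w) := by
  unfold Tform
  calc ∑ j ∈ range (n/d), w ^ 2 ^ (j * d)
      = ∑ i ∈ range (n/n'), ∑ i' ∈ range (n'/d), w ^ 2 ^ ((i * (n'/d) + i') * d) := by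
        rw [← sum_range_mul_eq (fun j => w ^ 2 ^ (j*d)) (n/n') (n'/d),
          Nat.div_mul_div_comm h2 h1, mul_comm n n', Nat.mul_div_mul_left n d hn']
    _ = ∑ i' ∈ range (n'/d), (∑ i ∈ range (n/n'), w ^ 2 ^ (i * n')) ^ 2 ^ (i' * d) := by
        rw [Finset.sum_comm]
        refine Finset.sum_congr rfl fun i' _ => ?_
        rw [sum_pow_char_pow]
        refine Finset.sum_congr rfl fun i _ => ?_
        rw [← pow_mul, ← pow_add, add_mul, mul_assoc, Nat.div_mul_cancel h1]

omit [CharP K 2] in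
lemma Tform_self (d : ℕ) (hd : 0 < d) (w : K) : Tform d d w = w := by
  unfold Tform
  rw [Nat.div_self hd]
  simp

lemma Tform_one (n d : ℕ) (h : Odd (n/d)) : Tform n d (1 : K) = 1 := by
  unfold Tform
  obtain ⟨k, hk⟩ := h
  have h2 : (2 : K) = 0 := CharTwo.two_eq_zero
  simp only [one_pow, Finset.sum_const, Finset.card_range, nsmul_eq_mul, hk]
  push_cast
  rw [h2]
  ring

lemma char2_cancel {u v : K} (h : u + v = 0) : u = v := by
  have h2 : u + v = v + v := by rw [h, CharTwo.add_self_eq_zero]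
  exact add_right_cancel h2

lemma char2_add_ne {u v : K} (h : u ≠ v) : u + v ≠ 0 := fun hc => h (char2_cancel hc)

end helpers
theorem aux7 {K : Type} [Field K] [CharP K 2] :
    ∀ (l n : ℕ) (e : ℕ → ℕ) (γ : ℕ → K) (a b Y : K),
      (∀ j, 1 ≤ j → j + 1 ≤ l - 1 → e j ∣ e (j+1)) →
      (2 ≤ l → e (l-1) ∣ n) →
      (∀ j, 1 ≤ j → j ≤ l - 1 → Odd (n / e j)) →
      (∀ j, 1 ≤ j → j ≤ l - 1 → γ j ^ 2 ^ (e j) = γ j) →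
      (∀ t, 1 ≤ t → t ≤ l - 1 → (1:K) + ∑ j ∈ Icc 1 t, γ j ^ 2 ≠ 0) →
      a ≠ b → a ^ 2 ^ n = a → b ^ 2 ^ n = b → Y ^ 2 ^ n = Y →
      (1 + ∑ j ∈ Icc 1 (l-1), γ j ^ 2) * (a + b)^2 * Y
        + ∑ j ∈ Icc 1 (l-1), γ j ^ 2 *
            (a * Tform n (e j) (a * Y) + b * Tform n (e j) (b * Y)) = 0 →
      Y = 0 := by
  intro l
  induction l with
  | zero =>
    intro n e γ a b Y _ _ _ _ _ hab _ _ _ heq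
    simp only [Nat.zero_sub, show (0:ℕ) - 1 = 0 from rfl, Finset.Icc_eq_empty (by omega : ¬ (1:ℕ) ≤ 0),
      Finset.sum_empty, add_zero] at heq
    have hc : a + b ≠ 0 := char2_add_ne hab
    have := mul_eq_zero.mp heq
    rcases this with h | h
    · exact absurd h (by simp [pow_ne_zero, hc])
    · exact h
  | succ l ih =>
    intro n e γ a b Y hdiv htop hodd hγ hsum hab ha hb hY heq
    simp only [Nat.add_sub_cancel] at hdiv htop hodd hγ hsum heq
    have h2 : (2:K) = 0 := CharTwo.two_eq_zero
    have hc : a + b ≠ 0 := char2_add_ne hab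
    rcases Nat.eq_zero_or_pos l with rfl | hl1
    · -- l = 0 : empty sums
      simp only [Finset.Icc_eq_empty (by omega : ¬ (1:ℕ) ≤ 0), Finset.sum_empty, add_zero] at heq
      have := mul_eq_zero.mp heq
      rcases this with h | h
      · exact absurd h (by simp [pow_ne_zero, hc])
      · exact h
    -- main case : l ≥ 1
    obtain ⟨L, rfl⟩ : ∃ L, l = L + 1 := ⟨l - 1, by omega⟩
    -- basic facts about the top level
    have hs : (1:K) + ∑ j ∈ Icc 1 (L+1), γ j ^ 2 ≠ 0 := hsum (L+1) (by omega) le_rfl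
    set s := ∑ j ∈ Icc 1 (L+1), γ j ^ 2 with hsdef
    have hn'dvd : e (L+1) ∣ n := htop (by omega)
    have hoddl : Odd (n / e (L+1)) := hodd (L+1) (by omega) le_rfl
    have hn'pos : 0 < e (L+1) := by
      by_contra hcon
      have : e (L+1) = 0 := by omega
      rw [this, Nat.div_zero] at hoddl
      simp [Nat.odd_iff] at hoddl
    have hchainA : ∀ k, k ≤ (L+1) → ∀ j, 1 ≤ j → j ≤ k → e j ∣ e k := by
      intro k
      induction k with
      | zero => intro _ j h1 h2; omega
      | succ k ihk =>
        intro hk1 j h1 hj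
        rcases Nat.eq_or_lt_of_le hj with rfl | h
        · exact dvd_refl _
        · exact (ihk (by omega) j h1 (by omega)).trans (hdiv k (by omega) (by omega))
    have hchain : ∀ j, 1 ≤ j → j ≤ (L+1) → e j ∣ e (L+1) := fun j h1 hj => hchainA (L+1) le_rfl j h1 hj
    -- memberships in the subfield F_{2^{e (L+1)}}
    have hγm : ∀ j ∈ Icc 1 (L+1), γ j ^ 2 ^ (e (L+1)) = γ j := by
      intro j hj
      rw [Finset.mem_Icc] at hj
      exact fix_of_dvd (hchain j hj.1 hj.2) (hγ j hj.1 hj.2)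
    have hsm : s ^ 2 ^ (e (L+1)) = s := fix_sum _ _ (fun j hj => fix_sq (hγm j hj))
    have hinvm : ((1 + s)⁻¹ : K) ^ 2 ^ (e (L+1)) = (1+s)⁻¹ := fix_inv (fix_add fix_one hsm)
    -- the two auxiliary elements
    set α := (1+s)⁻¹ * ∑ j ∈ Icc 1 (L+1), γ j ^ 2 * Tform n (e j) (a * Y) with hαdef
    set β := (1+s)⁻¹ * ∑ j ∈ Icc 1 (L+1), γ j ^ 2 * Tform n (e j) (b * Y) with hβdef
    have hTmemgen : ∀ u v : K, u ^ 2 ^ n = u → v ^ 2 ^ n = v → ∀ j ∈ Icc 1 (L+1),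
        (Tform n (e j) (u * v)) ^ 2 ^ (e (L+1)) = Tform n (e j) (u * v) := by
      intro u v hu hv j hj
      rw [Finset.mem_Icc] at hj
      exact fix_of_dvd (hchain j hj.1 hj.2)
        (Tform_mem n (e j) ((hchain j hj.1 hj.2).trans hn'dvd) (fix_mul hu hv))
    have hαm : α ^ 2 ^ (e (L+1)) = α :=
      fix_mul hinvm (fix_sum _ _ (fun j hj =>
        fix_mul (fix_sq (hγm j hj)) (hTmemgen a Y ha hY j hj)))
    have hβm : β ^ 2 ^ (e (L+1)) = β :=
      fix_mul hinvm (fix_sum _ _ (fun j hj =>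
        fix_mul (fix_sq (hγm j hj)) (hTmemgen b Y hb hY j hj)))
    -- Step 1 : c² Y = aα + bβ
    have hα0 : (1+s) * α = ∑ j ∈ Icc 1 (L+1), γ j ^ 2 * Tform n (e j) (a * Y) := by
      rw [hαdef, ← mul_assoc, mul_inv_cancel₀ hs, one_mul]
    have hβ0 : (1+s) * β = ∑ j ∈ Icc 1 (L+1), γ j ^ 2 * Tform n (e j) (b * Y) := by
      rw [hβdef, ← mul_assoc, mul_inv_cancel₀ hs, one_mul]
    have hsplit : ∑ j ∈ Icc 1 (L+1), γ j ^ 2 *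
          (a * Tform n (e j) (a * Y) + b * Tform n (e j) (b * Y))
        = a * (∑ j ∈ Icc 1 (L+1), γ j ^ 2 * Tform n (e j) (a * Y))
          + b * (∑ j ∈ Icc 1 (L+1), γ j ^ 2 * Tform n (e j) (b * Y)) := by
      rw [Finset.mul_sum, Finset.mul_sum, ← Finset.sum_add_distrib]
      exact Finset.sum_congr rfl fun j _ => by ring
    have heq' : (1+s) * (a+b)^2 * Y = ∑ j ∈ Icc 1 (L+1), γ j ^ 2 *
          (a * Tform n (e j) (a * Y) + b * Tform n (e j) (b * Y)) :=
      char2_cancel heq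
    have hY1 : (a+b)^2 * Y = a * α + b * β := by
      apply mul_left_cancel₀ hs
      linear_combination heq' + hsplit - a * hα0 - b * hβ0
    -- τ and z
    set z := a * (a+b)⁻¹ with hzdef
    have hzm : z ^ 2 ^ n = z := fix_mul ha (fix_inv (fix_add ha hb))
    set τ := Tform n (e (L+1)) z with hτdef
    have hτm : τ ^ 2 ^ (e (L+1)) = τ := Tform_mem n (e (L+1)) hn'dvd hzm
    have hcc : (a+b) * (a+b)⁻¹ = 1 := mul_inv_cancel₀ hc
    -- expressing aY and bY
    have hzc : z * (a+b) = a := by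
      rw [hzdef, mul_assoc, inv_mul_cancel₀ hc, mul_one]
    have haY : a * Y = α * z^2 + β * (z + z^2) := by
      apply mul_left_cancel₀ (show ((a+b)*(a+b) : K) ≠ 0 from mul_ne_zero hc hc)
      linear_combination a * hY1 - ((α+β)*((a+b)*z+a) + β*(a+b)) * hzc - a^2*β*h2
    have hbY : b * Y = α * (z + z^2) + β * (1 + z^2) := by
      apply mul_left_cancel₀ (show ((a+b)*(a+b) : K) ≠ 0 from mul_ne_zero hc hc)
      linear_combination b * hY1 - (α*(a+b) + (α+β)*((a+b)*z+a)) * hzc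
        - (a^2*α + a^2*β + a*b*β)*h2
    -- Z and the top-level trace values
    set Z := τ * α + (τ + 1) * β with hZdef
    have hT1 : Tform n (e (L+1)) (1 : K) = 1 := Tform_one n (e (L+1)) hoddl
    have hTopA : Tform n (e (L+1)) (a * Y) = τ * Z := by
      rw [haY, Tform_add, Tform_smul n (e (L+1)) hαm, Tform_smul n (e (L+1)) hβm, Tform_add,
        Tform_sq, hZdef]
      ring
    have hTopB : Tform n (e (L+1)) (b * Y) = (τ + 1) * Z := by
      rw [hbY, Tform_add, Tform_smul n (e (L+1)) hαm, Tform_smul n (e (L+1)) hβm, Tform_add,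
        Tform_add, Tform_sq, hT1, hZdef]
      linear_combination (-(τ * β)) * h2
    have hTA : ∀ j ∈ Icc 1 (L+1), Tform n (e j) (a * Y) = Tform (e (L+1)) (e j) (τ * Z) := by
      intro j hj
      rw [Finset.mem_Icc] at hj
      rw [Tform_trans n (e (L+1)) (e j) (hchain j hj.1 hj.2) hn'dvd hn'pos, hTopA]
    have hTB : ∀ j ∈ Icc 1 (L+1), Tform n (e j) (b * Y) = Tform (e (L+1)) (e j) ((τ + 1) * Z) := by
      intro j hj
      rw [Finset.mem_Icc] at hj
      rw [Tform_trans n (e (L+1)) (e j) (hchain j hj.1 hj.2) hn'dvd hn'pos, hTopB]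
    have hα1 : (1+s) * α = ∑ j ∈ Icc 1 (L+1), γ j ^ 2 * Tform (e (L+1)) (e j) (τ * Z) := by
      rw [hα0]
      exact Finset.sum_congr rfl fun j hj => by rw [hTA j hj]
    have hβ1 : (1+s) * β = ∑ j ∈ Icc 1 (L+1), γ j ^ 2 * Tform (e (L+1)) (e j) ((τ + 1) * Z) := by
      rw [hβ0]
      exact Finset.sum_congr rfl fun j hj => by rw [hTB j hj]
    -- split off the top term
    have hssplit : s = (∑ j ∈ Icc 1 L, γ j ^ 2) + γ (L+1) ^ 2 :=
      Finset.sum_Icc_succ_top (by omega) _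
    have hα1' : (1+s) * α = (∑ j ∈ Icc 1 L, γ j ^ 2 * Tform (e (L+1)) (e j) (τ * Z))
        + γ (L+1) ^ 2 * (τ * Z) := by
      rw [hα1, Finset.sum_Icc_succ_top (by omega : 1 ≤ L + 1), Tform_self (e (L+1)) hn'pos]
    have hβ1' : (1+s) * β = (∑ j ∈ Icc 1 L, γ j ^ 2 * Tform (e (L+1)) (e j) ((τ + 1) * Z))
        + γ (L+1) ^ 2 * ((τ + 1) * Z) := by
      rw [hβ1, Finset.sum_Icc_succ_top (by omega : 1 ≤ L + 1), Tform_self (e (L+1)) hn'pos]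
    have hE1 : (1+s) * Z = τ * (∑ j ∈ Icc 1 L, γ j ^ 2 * Tform (e (L+1)) (e j) (τ * Z))
        + (τ + 1) * (∑ j ∈ Icc 1 L, γ j ^ 2 * Tform (e (L+1)) (e j) ((τ + 1) * Z))
        + γ (L+1) ^ 2 * Z := by
      have hZrel : (1+s) * Z = τ * ((1+s) * α) + (τ + 1) * ((1+s) * β) := by
        rw [hZdef]; ring
      rw [hZrel, hα1', hβ1']
      linear_combination (γ (L+1) ^ 2 * Z * (τ^2 + τ)) * h2
    have hsplit2 : ∑ j ∈ Icc 1 L, γ j ^ 2 *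
          (τ * Tform (e (L+1)) (e j) (τ * Z) + (τ + 1) * Tform (e (L+1)) (e j) ((τ + 1) * Z))
        = τ * (∑ j ∈ Icc 1 L, γ j ^ 2 * Tform (e (L+1)) (e j) (τ * Z))
          + (τ + 1) * (∑ j ∈ Icc 1 L, γ j ^ 2 * Tform (e (L+1)) (e j) ((τ + 1) * Z)) := by
      rw [Finset.mul_sum, Finset.mul_sum, ← Finset.sum_add_distrib]
      exact Finset.sum_congr rfl fun j _ => by ring
    have hfin : (1 + ∑ j ∈ Icc 1 L, γ j ^ 2) * (τ + (τ + 1))^2 * Z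
        + ∑ j ∈ Icc 1 L, γ j ^ 2 *
            (τ * Tform (e (L+1)) (e j) (τ * Z) + (τ + 1) * Tform (e (L+1)) (e j) ((τ + 1) * Z)) = 0 := by
      linear_combination hsplit2 - hE1 + Z * hssplit
        + ((1 + ∑ j ∈ Icc 1 L, γ j ^ 2) * Z * (2*τ^2 + 2*τ + 1)) * h2
    -- apply the induction hypothesis
    have hZ0 : Z = 0 := by
      refine ih (e (L+1)) e γ τ (τ + 1) Z ?_ ?_ ?_ ?_ ?_ ?_ hτm (fix_add hτm fix_one)
        (fix_add (fix_mul hτm hαm) (fix_mul (fix_add hτm fix_one) hβm)) ?_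
      · intro j h1 hj
        exact hdiv j h1 (by omega)
      · intro _
        exact hdiv L (by omega) (by omega)
      · intro j h1 hj
        simp only [Nat.add_sub_cancel] at hj
        have hej : e j ∣ e (L+1) := hchain j h1 (by omega)
        have hkey : n / e j = (n / e (L+1)) * (e (L+1) / e j) := by
          rw [Nat.div_mul_div_comm hn'dvd hej, mul_comm n (e (L+1)),
            Nat.mul_div_mul_left n (e j) hn'pos]
        have hoddj := hodd j h1 (by omega)
        rw [hkey] at hoddj
        exact (Nat.odd_mul.mp hoddj).2
      · intro j h1 hj
        simp only [Nat.add_sub_cancel] at hj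
        exact hγ j h1 (by omega)
      · intro t h1 ht
        simp only [Nat.add_sub_cancel] at ht
        exact hsum t h1 (by omega)
      · intro h
        have h01 : (0:K) = 1 := by linear_combination h
        exact zero_ne_one h01
      · simpa only [Nat.add_sub_cancel] using hfin
    -- conclude
    have hα3 : α = 0 := by
      have h0 : (1+s) * α = 0 := by
        rw [hα1]
        exact Finset.sum_eq_zero fun j _ => by rw [hZ0, mul_zero, Tform_zero, mul_zero]
      rcases mul_eq_zero.mp h0 with h | h
      · exact absurd h hs
      · exact h
    have hβ3 : β = 0 := by
      have h0 : (1+s) * β = 0 := by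
        rw [hβ1]
        exact Finset.sum_eq_zero fun j _ => by rw [hZ0, mul_zero, Tform_zero, mul_zero]
      rcases mul_eq_zero.mp h0 with h | h
      · exact absurd h hs
      · exact h
    have hY0 : (a+b)^2 * Y = 0 := by rw [hY1, hα3, hβ3]; ring
    rcases mul_eq_zero.mp hY0 with h | h
    · exact absurd h (pow_ne_zero 2 hc)
    · exact h

/-- Key linear-algebra step (Lemma 6 of the paper, field version): for distinct
`a, b ∈ K = 𝔽_{2^m}`, the only `x ∈ K` with
`(a²+b²)x + ∑_{j=1}^{l−1} [γ_j a (T_j(γ_j a x) + γ_j a x)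
  + γ_j b (T_j(γ_j b x) + γ_j b x)] = 0` is `x = 0`. -/
theorem stmt7 (m l : ℕ) (hm : 1 ≤ m) (hl : 1 ≤ l)
    (K : Type) [Field K] [Fintype K] (hcard : Fintype.card K = 2 ^ m)
    (e : ℕ → ℕ) (he0 : e 0 = 1) (hel : e l = m)
    (he01 : e 0 ≤ e 1) (hemono : ∀ j, 1 ≤ j → j + 1 ≤ l → e j < e (j + 1))
    (hediv : ∀ j, j < l → e j ∣ e (j + 1))
    (hodd : ∀ j, 1 ≤ j → j ≤ l - 1 → Odd (m / e j))
    (γ : ℕ → K) (hγ : ∀ j, 1 ≤ j → j ≤ l - 1 → γ j ^ 2 ^ e j = γ j)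
    (hγsum : ∀ t, 1 ≤ t → t ≤ l - 1 →
      (1 : K) + ∑ j ∈ Finset.Icc 1 t, γ j ^ 2 ≠ 0)
    (a b : K) (hab : a ≠ b) (x : K)
    (hx : (a ^ 2 + b ^ 2) * x + ∑ j ∈ Finset.Icc 1 (l - 1),
        (γ j * a * (Tform m (e j) (γ j * a * x) + γ j * a * x)
          + γ j * b * (Tform m (e j) (γ j * b * x) + γ j * b * x)) = 0) :
    x = 0 := by
  haveI hK2 : CharP K 2 := by
    have hchar := ringChar.charP K
    obtain ⟨np, hp, hKcard⟩ := FiniteField.card K (ringChar K)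
    have h1 : ringChar K ∣ 2 ^ m := by
      rw [← hcard, hKcard]
      exact dvd_pow_self _ np.ne_zero
    have : ringChar K = 2 :=
      (Nat.prime_dvd_prime_iff_eq hp Nat.prime_two).mp (hp.dvd_of_dvd_pow h1)
    exact ringChar.of_eq this
  have h2 : (2:K) = 0 := CharTwo.two_eq_zero
  have hfm : ∀ y : K, y ^ 2 ^ m = y := fun y => by
    rw [← hcard]; exact FiniteField.pow_card y
  have hterm : ∀ j ∈ Finset.Icc 1 (l-1),
      γ j * a * (Tform m (e j) (γ j * a * x) + γ j * a * x)
        + γ j * b * (Tform m (e j) (γ j * b * x) + γ j * b * x)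
      = γ j ^ 2 * (a * Tform m (e j) (a * x) + b * Tform m (e j) (b * x))
        + γ j ^ 2 * ((a+b)^2 * x) := by
    intro j hj
    rw [Finset.mem_Icc] at hj
    rw [mul_assoc (γ j) a x, mul_assoc (γ j) b x,
      Tform_smul m (e j) (hγ j hj.1 hj.2), Tform_smul m (e j) (hγ j hj.1 hj.2)]
    linear_combination (-(γ j ^ 2 * a * b * x)) * h2
  have hsum1 : ∑ j ∈ Finset.Icc 1 (l-1),
      (γ j * a * (Tform m (e j) (γ j * a * x) + γ j * a * x)
        + γ j * b * (Tform m (e j) (γ j * b * x) + γ j * b * x))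
      = (∑ j ∈ Finset.Icc 1 (l-1),
          γ j ^ 2 * (a * Tform m (e j) (a * x) + b * Tform m (e j) (b * x)))
        + (∑ j ∈ Finset.Icc 1 (l-1), γ j ^ 2) * ((a+b)^2 * x) := by
    rw [Finset.sum_congr rfl hterm, Finset.sum_add_distrib, ← Finset.sum_mul]
  have hnorm : (1 + ∑ j ∈ Finset.Icc 1 (l-1), γ j ^ 2) * (a + b)^2 * x
      + ∑ j ∈ Finset.Icc 1 (l-1), γ j ^ 2 *
          (a * Tform m (e j) (a * x) + b * Tform m (e j) (b * x)) = 0 := by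
    linear_combination hx - hsum1 + (a*b*x) * h2
  refine aux7 l m e γ a b x ?_ ?_ hodd hγ hγsum hab (hfm a) (hfm b) (hfm x) hnorm
  · intro j h1 hj
    exact hediv j (by omega)
  · intro hl2
    have hd := hediv (l-1) (by omega)
    rwa [show l - 1 + 1 = l by omega, hel] at hd
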